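/- The commutator (derived) subgroup of S equals the center of S: S′ = Z(S) = {(0, b) : b ∈ F₈}. -/

import Mathlib

/-- The field with 8 elements. -/
noncomputable abbrev F8 : Type := GaloisField 2 3

/-- A Sylow 2-subgroup of the Suzuki group `Sz(8)`: the underlying set is `F₈ × F₈`
with multiplication `(a, b) * (c, d) = (a + c, b + d + c * a ^ 4)`. -/
structure SylowSz8 where
  a : F8
  b : F8

namespace SylowSz8

noncomputable instance : Mul SylowSz8 :=
  ⟨fun x y => ⟨x.a + y.a, x.b + y.b + y.a * x.a ^ 4⟩⟩

noncomputable instance : One SylowSz8 := ⟨⟨0, 0⟩⟩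

noncomputable instance : Inv SylowSz8 := ⟨fun x => ⟨x.a, x.b + x.a ^ 5⟩⟩

@[simp] theorem mul_a (x y : SylowSz8) : (x * y).a = x.a + y.a := rfl
@[simp] theorem mul_b (x y : SylowSz8) : (x * y).b = x.b + y.b + y.a * x.a ^ 4 := rfl
@[simp] theorem one_a : (1 : SylowSz8).a = 0 := rfl
@[simp] theorem one_b : (1 : SylowSz8).b = 0 := rfl
@[simp] theorem inv_a (x : SylowSz8) : x⁻¹.a = x.a := rfl
@[simp] theorem inv_b (x : SylowSz8) : x⁻¹.b = x.b + x.a ^ 5 := rfl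

theorem ext' : ∀ {x y : SylowSz8}, x.a = y.a → x.b = y.b → x = y
  | ⟨_, _⟩, ⟨_, _⟩, rfl, rfl => rfl

noncomputable instance : Group SylowSz8 where
  mul_assoc x y z := by
    have frob : ∀ u v : F8, (u + v) ^ 4 = u ^ 4 + v ^ 4 := fun u v => by
      have := add_pow_char_pow (R := F8) (p := 2) (n := 2) u v
      simpa using this
    refine ext' ?_ ?_
    · simp [add_assoc]
    · simp only [mul_b, mul_a, frob]
      ring
  one_mul x := by
    refine ext' ?_ ?_ <;> simp
  mul_one x := by
    refine ext' ?_ ?_ <;> simp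
  inv_mul_cancel x := by
    have h2 : ∀ u : F8, u + u = 0 := fun u => CharTwo.add_self_eq_zero u
    refine ext' ?_ ?_
    · simp [h2]
    · simp only [mul_b, inv_a, inv_b, one_b]
      have : x.a * x.a ^ 4 = x.a ^ 5 := by ring
      rw [this]
      calc x.b + x.a ^ 5 + x.b + x.a ^ 5
          = (x.b + x.b) + (x.a ^ 5 + x.a ^ 5) := by ring
        _ = 0 := by rw [h2, h2, add_zero]

end SylowSz8

/-! Commutators of `S` are `⁅x, y⁆ = (0, B(x.a, y.a))` for the symmetric form
`B(p, q) = q p⁴ + p q⁴` on `F₈`, so everything reduces to two properties of `B`. Writing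
`B(a g, a) = a⁵ (g⁴ + g)`, pick `g ∉ F₂`: then `g⁴ + g ≠ 0`, since `g⁴ = -g` would force
`g² = g⁸ = g`. As `x ↦ x⁵` is a bijection of `F₈` (`5` is prime to `7`), `B` is onto, so every
`(0, b)` is a commutator; and `B(·, a)` vanishes identically only for `a = 0`, so only the
elements `(0, b)` commute with all `(c, 0)`. -/

theorem CharTwo.add_pow_four {R : Type*} [CommSemiring R] [CharP R 2] (x y : R) :
    (x + y) ^ 4 = x ^ 4 + y ^ 4 :=
  add_pow_char_pow (p := 2) (n := 2) x y

section FieldOfCardEight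

variable {K : Type*} [Field K]

def suzukiForm (p q : K) : K := q * p ^ 4 + p * q ^ 4

theorem suzukiForm_mul_left_self (a g : K) : suzukiForm (a * g) a = a ^ 5 * (g ^ 4 + g) := by
  unfold suzukiForm
  ring

variable [Finite K]

theorem pow_eight_eq_self_of_natCard_eq_eight (hK : Nat.card K = 8) (x : K) : x ^ 8 = x := by
  have := Fintype.ofFinite K
  rw [← hK, ← Fintype.card_eq_nat_card]
  exact FiniteField.pow_card x

theorem pow_three_pow_five_of_natCard_eq_eight (hK : Nat.card K = 8) (x : K) :
    (x ^ 3) ^ 5 = x := by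
  have h8 := pow_eight_eq_self_of_natCard_eq_eight hK x
  calc (x ^ 3) ^ 5 = x ^ 8 * x ^ 7 := by ring
    _ = x * x ^ 7 := by rw [h8]
    _ = x ^ 8 := by ring
    _ = x := h8

theorem exists_pow_four_add_self_ne_zero (hK : Nat.card K = 8) : ∃ g : K, g ^ 4 + g ≠ 0 := by
  classical
  have := Fintype.ofFinite K
  obtain ⟨g, -, hg⟩ : ∃ g ∈ (Finset.univ : Finset K), g ∉ ({0, 1} : Finset K) := by
    refine Finset.exists_mem_notMem_of_card_lt_card ?_
    rw [Finset.card_univ, Fintype.card_eq_nat_card, hK]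
    exact Finset.card_le_two.trans_lt (by norm_num)
  refine ⟨g, fun h => hg ?_⟩
  have hsq : g ^ 2 = g :=
    calc g ^ 2 = (g ^ 4) ^ 2 := by rw [eq_neg_of_add_eq_zero_left h, neg_sq]
      _ = g := by rw [← pow_mul]; exact pow_eight_eq_self_of_natCard_eq_eight hK g
  have : g * (g - 1) = 0 := by linear_combination hsq
  simpa [sub_eq_zero] using this

theorem exists_suzukiForm_eq (hK : Nat.card K = 8) (t : K) : ∃ p q, suzukiForm p q = t := by
  obtain ⟨g, hg⟩ := exists_pow_four_add_self_ne_zero hK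
  refine ⟨(t / (g ^ 4 + g)) ^ 3 * g, (t / (g ^ 4 + g)) ^ 3, ?_⟩
  rw [suzukiForm_mul_left_self, pow_three_pow_five_of_natCard_eq_eight hK, div_mul_cancel₀ _ hg]

theorem eq_zero_of_forall_suzukiForm_eq_zero (hK : Nat.card K = 8) {a : K}
    (h : ∀ c, suzukiForm c a = 0) : a = 0 := by
  obtain ⟨g, hg⟩ := exists_pow_four_add_self_ne_zero hK
  by_contra ha
  have := h (a * g)
  rw [suzukiForm_mul_left_self] at this
  exact mul_ne_zero (pow_ne_zero 5 ha) hg this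

end FieldOfCardEight

theorem natCard_F8 : Nat.card F8 = 8 := GaloisField.card 2 3 (by norm_num)

namespace SylowSz8

open scoped commutatorElement

theorem commutatorElement_a (x y : SylowSz8) : ⁅x, y⁆.a = 0 := by
  simp only [commutatorElement_def, mul_a, inv_a]
  grind

theorem commutatorElement_b (x y : SylowSz8) : ⁅x, y⁆.b = suzukiForm x.a y.a := by
  simp only [commutatorElement_def, mul_b, mul_a, inv_a, inv_b, CharTwo.add_pow_four, suzukiForm]
  grind

noncomputable def aHom : SylowSz8 →* Multiplicative F8 where
  toFun x := Multiplicative.ofAdd x.a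
  map_one' := rfl
  map_mul' _ _ := rfl

theorem mem_commutator_iff (x : SylowSz8) : x ∈ commutator SylowSz8 ↔ x.a = 0 := by
  constructor
  · intro hx
    exact ofAdd_eq_one.mp (Abelianization.commutator_subset_ker aHom hx)
  · intro hx
    obtain ⟨p, q, hpq⟩ := exists_suzukiForm_eq natCard_F8 x.b
    have : x = ⁅(⟨p, 0⟩ : SylowSz8), ⟨q, 0⟩⁆ :=
      ext' (by rw [commutatorElement_a, hx]) (by rw [commutatorElement_b, hpq])
    rw [this, commutator_eq_closure]
    exact Subgroup.subset_closure (commutator_mem_commutatorSet _ _)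

theorem mem_center_iff (x : SylowSz8) : x ∈ Subgroup.center SylowSz8 ↔ x.a = 0 := by
  simp only [Subgroup.mem_center_iff, ← commutatorElement_eq_one_iff_mul_comm]
  constructor
  · intro h
    refine eq_zero_of_forall_suzukiForm_eq_zero natCard_F8 fun c => ?_
    rw [← commutatorElement_b ⟨c, 0⟩, h, one_b]
  · intro hx g
    refine ext' (commutatorElement_a g x) ?_
    simp [commutatorElement_b, suzukiForm, hx]

end SylowSz8

/-- The commutator subgroup of `S` equals its center, namely `{(0, b) : b ∈ F₈}`. -/
theorem commutator_SylowSz8_eq_center :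
    commutator SylowSz8 = Subgroup.center SylowSz8 ∧
    (∀ x : SylowSz8, x ∈ commutator SylowSz8 ↔ x.a = 0) :=
  ⟨Subgroup.ext fun x => (SylowSz8.mem_commutator_iff x).trans (SylowSz8.mem_center_iff x).symm,
    SylowSz8.mem_commutator_iff⟩
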